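/- arXiv:1302.6951 — 4 statements merged into one kernel-verified Lean document; each statement's English description precedes it below -/
import Mathlib

section
/- If Q and P are probability measures on a space, A is a measurable set, and Φ = log(1 + P(A)^{-1})·1_A, then the relative entropy inequality implies Q(A) ≤ (log 2 + I(Q|P)) / log(1 + P(A)^{-1}). -/
open MeasureTheory

lemma integral_exp_indicator_const {E : Type*} [MeasurableSpace E] (P : Measure E)
    [IsProbabilityMeasure P] {A : Set E} (hA : MeasurableSet A) (c : ℝ) :
    ∫ x, Real.exp (A.indicator (fun _ => c) x) ∂P = 1 + P.real A * (Real.exp c - 1) := by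
  have hexp : (fun x => Real.exp (A.indicator (fun _ => c) x))
      = fun x => A.indicator (fun _ => Real.exp c - 1) x + 1 := by
    ext x
    by_cases hx : x ∈ A <;> simp [hx]
  rw [hexp, integral_add ((integrable_const _).indicator hA) (integrable_const _),
    integral_indicator_const _ hA]
  simp [add_comm]

theorem stmt_1_general {E : Type*} [MeasurableSpace E]
    (P Q : Measure E) [IsProbabilityMeasure P]
    (I : ℝ)
    (hineq : ∀ Φ : E → ℝ, Measurable Φ → (∃ C, ∀ x, |Φ x| ≤ C) →
      ∫ x, Φ x ∂Q ≤ I + Real.log (∫ x, Real.exp (Φ x) ∂P))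
    (A : Set E) (hA : MeasurableSet A) (hPA : 0 < (P A).toReal) :
    (Q A).toReal ≤ (Real.log 2 + I) / Real.log (1 + ((P A).toReal)⁻¹) := by
  set c := Real.log (1 + (P A).toReal⁻¹)
  have hc : 0 < c := Real.log_pos (by simpa using hPA)
  -- `c` is chosen so that `P(A) (e^c - 1) = 1`, i.e. `∫ e^{c 1_A} dP = 2`.
  have hexp_c : Real.exp c - 1 = (P A).toReal⁻¹ := by
    rw [Real.exp_log (by positivity)]; ring
  have hbounded : ∃ C, ∀ x, |A.indicator (fun _ => c) x| ≤ C :=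
    ⟨‖c‖, fun x => norm_indicator_le_norm_self (fun _ => c) x⟩
  have key := hineq _ (measurable_const.indicator hA) hbounded
  rw [integral_indicator_const _ hA, integral_exp_indicator_const P hA, hexp_c,
    measureReal_def, measureReal_def, mul_inv_cancel₀ hPA.ne', one_add_one_eq_two,
    smul_eq_mul] at key
  rw [le_div_iff₀ hc]
  linarith

/-- From the relative entropy inequality with `Φ = log(1 + P(A)⁻¹)·1_A` one deduces
`Q(A) ≤ (log 2 + I(Q|P)) / log(1 + P(A)⁻¹)`. -/
theorem stmt_1 {E : Type*} [MeasurableSpace E]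
    (P Q : Measure E) [IsProbabilityMeasure P] [IsProbabilityMeasure Q]
    (hac : Q ≪ P) (I : ℝ)
    (hineq : ∀ Φ : E → ℝ, Measurable Φ → (∃ C, ∀ x, |Φ x| ≤ C) →
      ∫ x, Φ x ∂Q ≤ I + Real.log (∫ x, Real.exp (Φ x) ∂P))
    (A : Set E) (hA : MeasurableSet A) (hPA : 0 < (P A).toReal) :
    (Q A).toReal ≤ (Real.log 2 + I) / Real.log (1 + ((P A).toReal)⁻¹) :=
  stmt_1_general P Q I hineq A hA hPA
end

section
/- Let Q minimize a function H(μ) = I(μ|P) − Γ(μ) over probability measures, where Γ is bounded on sets of finite entropy. Set B = {dQ/dP = 0}, δ = P(B), and Q_s = (Q + s·1_B·P)/(1+s·δ). Then I(Q_s|P) = (1+sδ)^{-1} ( I(Q|P) + sδ log s − (1+sδ) log(1+sδ) ); in particular I(Q_s|P) = I(Q|P) + sδ log s + O(s) as s → 0⁺. -/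
open MeasureTheory
open scoped ENNReal

/-- Relative entropy of a measure. -/
noncomputable def relEnt {E : Type*} [MeasurableSpace E] (ρ P : Measure E) : ℝ :=
  ∫ x, Real.log ((ρ.rnDeriv P x).toReal) ∂ρ

/-!
On the complement of `B` the density of `Q_s` is `dQ/dP` scaled by `(1+sδ)⁻¹`, while on `B`,
where `dQ/dP` vanishes, it is the constant `s/(1+sδ)`. Since `Q(B) = 0`, the integral defining
`I(Q_s|P)` splits into `(1+sδ)⁻¹(I(Q|P) - log(1+sδ))` from the `Q`-part and
`sδ(1+sδ)⁻¹ log (s/(1+sδ))` from the part on `B`.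
-/

namespace MeasureTheory.Measure

variable {E : Type*} [MeasurableSpace E] {μ ν : Measure E}

theorem measure_setOf_rnDeriv_eq_zero (hμν : μ ≪ ν) [μ.HaveLebesgueDecomposition ν] :
    μ {x | μ.rnDeriv ν x = 0} = 0 := by
  simpa using ae_iff.mp ((rnDeriv_pos hμν).mono fun _ hx => hx.ne')

theorem rnDeriv_smul_add_smul_restrict [IsFiniteMeasure μ] [IsFiniteMeasure ν] {B : Set E}
    (hB : MeasurableSet B) {c a : ℝ≥0∞} (hc : c ≠ ∞) (ha : a ≠ ∞) :
    (c • (μ + a • ν.restrict B)).rnDeriv ν =ᵐ[ν]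
      fun x => c * (μ.rnDeriv ν x + a * B.indicator 1 x) := by
  have := (ν.restrict B).smul_finite ha
  filter_upwards [rnDeriv_smul_left_of_ne_top (μ + a • ν.restrict B) ν hc,
    rnDeriv_add μ (a • ν.restrict B) ν, rnDeriv_smul_left_of_ne_top (ν.restrict B) ν ha,
    rnDeriv_restrict_self ν hB] with x h_smul h_add h_smul' h_restrict
  simp only [Pi.smul_apply, Pi.add_apply, smul_eq_mul] at h_smul h_add h_smul' h_restrict
  rw [h_smul, h_add, h_smul', h_restrict]

section Mixture

variable [IsFiniteMeasure μ] [IsFiniteMeasure ν] {B : Set E} {r a : ℝ}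

theorem log_rnDeriv_smul_add_smul_restrict_ae_eq (hμν : μ ≪ ν) (hB : MeasurableSet B)
    (hμB : μ B = 0) (hr : 0 < r) :
    (fun x => Real.log ((ENNReal.ofReal r • (μ + ENNReal.ofReal a • ν.restrict B)).rnDeriv ν
      x).toReal) =ᵐ[μ] fun x => Real.log r + Real.log (μ.rnDeriv ν x).toReal := by
  filter_upwards [hμν.ae_le (rnDeriv_smul_add_smul_restrict (μ := μ) hB ENNReal.ofReal_ne_top
      ENNReal.ofReal_ne_top), measure_eq_zero_iff_ae_notMem.mp hμB, rnDeriv_pos hμν,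
    hμν.ae_le (rnDeriv_ne_top μ ν)] with x hx hxB hpos hne_top
  rw [hx, Set.indicator_of_notMem hxB, mul_zero, add_zero, ENNReal.toReal_mul,
    ENNReal.toReal_ofReal hr.le,
    Real.log_mul hr.ne' (ENNReal.toReal_ne_zero.mpr ⟨hpos.ne', hne_top⟩)]

theorem log_rnDeriv_smul_add_smul_restrict_ae_eq_restrict (hB : MeasurableSet B)
    (hB_zero : ∀ x ∈ B, μ.rnDeriv ν x = 0) (hr : 0 < r) (ha : 0 < a) :
    (fun x => Real.log ((ENNReal.ofReal r • (μ + ENNReal.ofReal a • ν.restrict B)).rnDeriv ν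
      x).toReal) =ᵐ[ν.restrict B] fun _ => Real.log r + Real.log a := by
  filter_upwards [ae_restrict_of_ae (rnDeriv_smul_add_smul_restrict (μ := μ) hB
      ENNReal.ofReal_ne_top ENNReal.ofReal_ne_top), ae_restrict_mem hB] with x hx hxB
  rw [hx, hB_zero x hxB, Set.indicator_of_mem hxB, Pi.one_apply, mul_one, zero_add,
    ENNReal.toReal_mul, ENNReal.toReal_ofReal hr.le, ENNReal.toReal_ofReal ha.le,
    Real.log_mul hr.ne' ha.ne']

theorem relEnt_smul_add_smul_restrict (hμν : μ ≪ ν)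
    (hent : Integrable (fun x => Real.log (μ.rnDeriv ν x).toReal) μ) (hB : MeasurableSet B)
    (hμB : μ B = 0) (hB_zero : ∀ x ∈ B, μ.rnDeriv ν x = 0) (hr : 0 < r) (ha : 0 < a) :
    relEnt (ENNReal.ofReal r • (μ + ENNReal.ofReal a • ν.restrict B)) ν =
      r * (relEnt μ ν + μ.real Set.univ * Real.log r
        + a * ν.real B * (Real.log r + Real.log a)) := by
  have hμ := log_rnDeriv_smul_add_smul_restrict_ae_eq (a := a) hμν hB hμB hr
  have hνB := log_rnDeriv_smul_add_smul_restrict_ae_eq_restrict hB hB_zero hr ha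
  have hint_μ := ((integrable_const _).add hent).congr hμ.symm
  have hint_νB := ((integrable_const _).congr hνB.symm).smul_measure
    (ENNReal.ofReal_ne_top (r := a))
  rw [relEnt, integral_smul_measure, integral_add_measure hint_μ hint_νB, integral_smul_measure,
    integral_congr_ae hμ, integral_congr_ae hνB, integral_add (integrable_const _) hent,
    integral_const, integral_const, measureReal_restrict_apply_univ, ENNReal.toReal_ofReal hr.le,
    ENNReal.toReal_ofReal ha.le, relEnt]
  simp only [smul_eq_mul]
  ring

end Mixture

end MeasureTheory.Measure

theorem stmt_2_general {E : Type*} [MeasurableSpace E]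
    (P Q : Measure E) [IsProbabilityMeasure P] [IsProbabilityMeasure Q]
    (hac : Q ≪ P)
    (hent : Integrable (fun x => Real.log ((Q.rnDeriv P x).toReal)) Q)
    (B : Set E) (hB : B = {x | Q.rnDeriv P x = 0})
    (δ : ℝ) (hδ : δ = (P B).toReal)
    (s : ℝ) (hs : 0 < s)
    (Qs : Measure E)
    (hQs : Qs = (ENNReal.ofReal (1 + s * δ))⁻¹ • (Q + (ENNReal.ofReal s) • P.restrict B)) :
    relEnt Qs P =
      (1 + s * δ)⁻¹ * (relEnt Q P + s * δ * Real.log s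
        - (1 + s * δ) * Real.log (1 + s * δ)) := by
  have hδ0 : 0 ≤ δ := hδ ▸ ENNReal.toReal_nonneg
  have hc : 0 < 1 + s * δ := by positivity
  have hBm : MeasurableSet B := hB ▸ Measure.measurable_rnDeriv Q P (measurableSet_singleton 0)
  have hQB : Q B = 0 := hB ▸ Measure.measure_setOf_rnDeriv_eq_zero hac
  rw [hQs, ← ENNReal.ofReal_inv_of_pos hc, Measure.relEnt_smul_add_smul_restrict hac hent hBm hQB
    (fun x hx => by rwa [hB] at hx) (inv_pos.mpr hc) hs, probReal_univ, Measure.real, ← hδ,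
    Real.log_inv]
  field_simp
  ring

/-- For `Q ≪ P`, `B = {dQ/dP = 0}`, `δ = P(B)` and
`Q_s = (Q + s·1_B·P)/(1+sδ)`, one has
`I(Q_s|P) = (1+sδ)⁻¹ (I(Q|P) + sδ log s − (1+sδ) log(1+sδ))`. -/
theorem stmt_2 {E : Type*} [MeasurableSpace E] [TopologicalSpace E] [PolishSpace E]
    [BorelSpace E]
    (P Q : Measure E) [IsProbabilityMeasure P] [IsProbabilityMeasure Q]
    (hac : Q ≪ P)
    (hent : Integrable (fun x => Real.log ((Q.rnDeriv P x).toReal)) Q)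
    (B : Set E) (hB : B = {x | Q.rnDeriv P x = 0})
    (δ : ℝ) (hδ : δ = (P B).toReal)
    (s : ℝ) (hs : 0 < s)
    (Qs : Measure E)
    (hQs : Qs = (ENNReal.ofReal (1 + s * δ))⁻¹ • (Q + (ENNReal.ofReal s) • P.restrict B)) :
    relEnt Qs P =
      (1 + s * δ)⁻¹ * (relEnt Q P + s * δ * Real.log s
        - (1 + s * δ) * Real.log (1 + s * δ)) :=
  stmt_2_general P Q hac hent B hB δ hδ s hs Qs hQs
end

section
/- Let Q ≪ P with finite relative entropy, Φ a positive bounded measurable function with ∫ Φ dQ = 1, ψ = Φ − 1, and Q_s(Φ) = ((1 + sΦ)/(1+s))·Q for s > 0. Then I(Q_s(Φ)|P) = I(Q|P) + s ∫ ψ log(dQ/dP) dQ + O(s²) as s → 0⁺. -/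
/-! The density of `Q_s(Φ)` with respect to `P` is `g_s · f` with `f = dQ/dP` and
`g_s = (1 + sΦ)/(1 + s) = 1 + s/(1 + s) · ψ`. Pointwise
`g log (g f) = klFun g + (g - 1) + log f + (g - 1) log f` with `klFun x = x log x + 1 - x`, and
`∫ g_s dQ = 1`, so `I(Q_s|P) - I(Q|P) = ∫ klFun g_s dQ + s/(1 + s) ∫ ψ log f dQ`. The
remainder lies between `0` and `∫ (g_s - 1)² dQ = O(s²)` because `0 ≤ klFun x ≤ (x - 1)²`, and
`s/(1 + s) = s + O(s²)`. -/

open MeasureTheory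

open InformationTheory Real

lemma InformationTheory.klFun_le_sq_sub_one {x : ℝ} (hx : 0 ≤ x) : klFun x ≤ (x - 1) ^ 2 := by
  rcases hx.eq_or_lt with rfl | hx
  · simp [klFun_zero]
  · have := mul_le_mul_of_nonneg_left (log_le_sub_one_of_pos hx) hx.le
    rw [klFun_apply]
    nlinarith

section WithDensity

variable {E : Type*} [MeasurableSpace E] {P Q : Measure E} {g : E → ℝ}

lemma llr_withDensity_ofReal [SigmaFinite P] [SigmaFinite Q] (hac : Q ≪ P) (hg : Measurable g)
    (hg_pos : ∀ x, 0 < g x) :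
    llr (Q.withDensity fun x => ENNReal.ofReal (g x)) P =ᵐ[Q] fun x => log (g x) + llr Q P x := by
  have hrn := hac.ae_le <| Measure.rnDeriv_withDensity_left_of_absolutelyContinuous hac
    hg.ennreal_ofReal.aemeasurable
  filter_upwards [hrn, hac.ae_le (Measure.rnDeriv_lt_top Q P), Measure.rnDeriv_pos hac]
    with x hx hfin hpos
  rw [llr, llr, hx, ENNReal.toReal_mul, ENNReal.toReal_ofReal (hg_pos x).le,
    log_mul (hg_pos x).ne' (ENNReal.toReal_pos hpos.ne' hfin.ne).ne']

lemma relEnt_withDensity_ofReal [SigmaFinite P] [SigmaFinite Q] (hac : Q ≪ P) (hg : Measurable g)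
    (hg_pos : ∀ x, 0 < g x) :
    relEnt (Q.withDensity fun x => ENNReal.ofReal (g x)) P
      = ∫ x, g x * (log (g x) + llr Q P x) ∂Q := by
  rw [relEnt, integral_withDensity_eq_integral_toReal_smul hg.ennreal_ofReal
    (ae_of_all _ fun _ => ENNReal.ofReal_lt_top)]
  refine integral_congr_ae ?_
  filter_upwards [llr_withDensity_ofReal hac hg hg_pos] with x hx
  rw [smul_eq_mul, ENNReal.toReal_ofReal (hg_pos x).le, ← hx, llr]

lemma relEnt_withDensity_sub_relEnt [IsProbabilityMeasure Q] [SigmaFinite P] {B : ℝ}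
    (hac : Q ≪ P) (hllr : Integrable (llr Q P) Q) (hg : Measurable g) (hg_pos : ∀ x, 0 < g x)
    (hg_le : ∀ x, g x ≤ B) (hg_one : ∫ x, g x ∂Q = 1) :
    relEnt (Q.withDensity fun x => ENNReal.ofReal (g x)) P - relEnt Q P
      = ∫ x, klFun (g x) ∂Q + ∫ x, (g x - 1) * llr Q P x ∂Q := by
  have hg_int : Integrable g Q := Integrable.of_bound hg.aestronglyMeasurable |B|
    (ae_of_all _ fun x => by
      rw [norm_of_nonneg (hg_pos x).le]; exact (hg_le x).trans (le_abs_self B))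
  have hg_sub_one_bdd : ∀ x, ‖g x - 1‖ ≤ |B| + 1 := fun x => by
    rw [norm_eq_abs, abs_le]
    constructor <;> linarith [hg_pos x, hg_le x, le_abs_self B, neg_abs_le B]
  have hkl_int : Integrable (fun x => klFun (g x)) Q :=
    Integrable.of_bound (measurable_klFun.comp hg).aestronglyMeasurable ((|B| + 1) ^ 2)
      (ae_of_all _ fun x => by
        rw [norm_of_nonneg (klFun_nonneg (hg_pos x).le)]
        calc klFun (g x) ≤ ‖g x - 1‖ ^ 2 := by
              rw [norm_eq_abs, sq_abs]; exact klFun_le_sq_sub_one (hg_pos x).le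
          _ ≤ (|B| + 1) ^ 2 := pow_le_pow_left₀ (norm_nonneg _) (hg_sub_one_bdd x) 2)
  have hmix_int : Integrable (fun x => (g x - 1) * llr Q P x) Q :=
    hllr.bdd_mul (hg.sub measurable_const).aestronglyMeasurable (ae_of_all _ hg_sub_one_bdd)
  have hsplit : ∀ x, g x * (log (g x) + llr Q P x)
      = (klFun (g x) + (g x - 1) * llr Q P x) + ((g x - 1) + llr Q P x) := fun x => by
    rw [klFun_apply]; ring
  have hmean : ∫ x, (g x - 1) ∂Q = 0 := by
    rw [integral_sub hg_int (integrable_const 1), hg_one, integral_const, probReal_univ,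
      one_smul, sub_self]
  rw [relEnt_withDensity_ofReal hac hg hg_pos, relEnt]
  simp_rw [hsplit]
  rw [integral_add (f := fun x => klFun (g x) + (g x - 1) * llr Q P x)
      (g := fun x => (g x - 1) + llr Q P x) (hkl_int.add hmix_int)
      ((hg_int.sub (integrable_const 1)).add hllr),
    integral_add hkl_int hmix_int, integral_add (f := fun x => g x - 1)
      (hg_int.sub (integrable_const 1)) hllr, hmean, llr_def]
  ring

end WithDensity

section MixtureDensity

variable {s φ C : ℝ}

lemma mixture_pos (hs : 0 ≤ s) (hφ : 0 ≤ φ) : 0 < (1 + s * φ) / (1 + s) := by positivity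

lemma mixture_le (hs : 0 ≤ s) (hφ : 0 ≤ φ) (hφC : φ ≤ C) : (1 + s * φ) / (1 + s) ≤ 1 + C := by
  rw [div_le_iff₀ (by linarith)]
  nlinarith

lemma mixture_sub_one (hs : 1 + s ≠ 0) : (1 + s * φ) / (1 + s) - 1 = s / (1 + s) * (φ - 1) := by
  field_simp
  ring

lemma klFun_mixture_le (hs : 0 ≤ s) (hφ : 0 ≤ φ) (hφC : φ ≤ C) :
    klFun ((1 + s * φ) / (1 + s)) ≤ s ^ 2 * (C ^ 2 + 1) := by
  have h1s : 0 < 1 + s := by linarith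
  have hratio : (s / (1 + s)) ^ 2 ≤ s ^ 2 := by
    rw [div_pow]
    exact div_le_self (sq_nonneg s) (by nlinarith)
  calc klFun ((1 + s * φ) / (1 + s)) ≤ ((1 + s * φ) / (1 + s) - 1) ^ 2 :=
        klFun_le_sq_sub_one (mixture_pos hs hφ).le
    _ = (s / (1 + s)) ^ 2 * (φ - 1) ^ 2 := by rw [mixture_sub_one h1s.ne', mul_pow]
    _ ≤ s ^ 2 * (C ^ 2 + 1) := by
        apply mul_le_mul hratio (by nlinarith) (sq_nonneg _) (sq_nonneg _)

variable {E : Type*} [MeasurableSpace E] {Q : Measure E} [IsProbabilityMeasure Q] {Φ : E → ℝ}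

lemma integral_mixture (hΦ : Integrable Φ Q) (hΦ_one : ∫ x, Φ x ∂Q = 1) (hs : 1 + s ≠ 0) :
    ∫ x, (1 + s * Φ x) / (1 + s) ∂Q = 1 := by
  rw [integral_div, integral_add (integrable_const 1) (hΦ.const_mul s), integral_const_mul,
    hΦ_one, integral_const, probReal_univ, one_smul, mul_one, div_self hs]

lemma integral_klFun_mixture_le (hs : 0 ≤ s) (hΦ_nonneg : ∀ x, 0 ≤ Φ x) (hΦ_le : ∀ x, Φ x ≤ C) :
    ∫ x, klFun ((1 + s * Φ x) / (1 + s)) ∂Q ≤ s ^ 2 * (C ^ 2 + 1) := by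
  refine (integral_mono_of_nonneg
    (ae_of_all _ fun x => klFun_nonneg (mixture_pos hs (hΦ_nonneg x)).le) (integrable_const _)
    (ae_of_all _ fun x => klFun_mixture_le hs (hΦ_nonneg x) (hΦ_le x))).trans_eq ?_
  simp

end MixtureDensity

lemma abs_sub_sq_div_mul_le {T s K : ℝ} (hT : 0 ≤ T) (hs : 0 ≤ s) :
    |T - s ^ 2 / (1 + s) * K| ≤ T + s ^ 2 * |K| := by
  refine (abs_sub _ _).trans ?_
  rw [abs_of_nonneg hT, abs_mul, abs_of_nonneg (by positivity)]
  gcongr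
  exact div_le_self (sq_nonneg s) (by linarith)

theorem stmt_3_general {E : Type*} [MeasurableSpace E]
    (P Q : Measure E) [IsProbabilityMeasure P] [IsProbabilityMeasure Q]
    (hac : Q ≪ P)
    (hent : Integrable (fun x => |Real.log ((Q.rnDeriv P x).toReal)|) Q)
    (Φ : E → ℝ) (hΦmeas : Measurable Φ) (hΦpos : ∀ x, 0 ≤ Φ x)
    (Cb : ℝ) (hΦbdd : ∀ x, Φ x ≤ Cb) (hΦint : ∫ x, Φ x ∂Q = 1)
    (Qs : ℝ → Measure E)
    (hQs : ∀ s, Qs s = Q.withDensity (fun x => ENNReal.ofReal ((1 + s * Φ x) / (1 + s)))) :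
    ∃ C : ℝ, ∀ s ∈ Set.Ioc (0:ℝ) 1,
      |relEnt (Qs s) P - relEnt Q P
        - s * ∫ x, (Φ x - 1) * Real.log ((Q.rnDeriv P x).toReal) ∂Q| ≤ C * s ^ 2 := by
  have hllr : Integrable (llr Q P) Q :=
    (integrable_norm_iff (measurable_llr Q P).aestronglyMeasurable).1 (by simpa only [norm_eq_abs])
  have hΦ_int : Integrable Φ Q := Integrable.of_bound hΦmeas.aestronglyMeasurable Cb
    (ae_of_all _ fun x => by rw [norm_of_nonneg (hΦpos x)]; exact hΦbdd x)
  set K := ∫ x, (Φ x - 1) * Real.log ((Q.rnDeriv P x).toReal) ∂Q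
  refine ⟨Cb ^ 2 + 1 + |K|, fun s hs => ?_⟩
  have hs0 : 0 ≤ s := hs.1.le
  have h1s : 0 < 1 + s := by linarith
  have hg_pos x : 0 < (1 + s * Φ x) / (1 + s) := mixture_pos hs0 (hΦpos x)
  have hexpand := relEnt_withDensity_sub_relEnt (g := fun x => (1 + s * Φ x) / (1 + s)) hac hllr
    (by fun_prop) hg_pos (fun x => mixture_le hs0 (hΦpos x) (hΦbdd x))
    (integral_mixture hΦ_int hΦint h1s.ne')
  have hfirst : ∫ x, ((1 + s * Φ x) / (1 + s) - 1) * llr Q P x ∂Q = s / (1 + s) * K := by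
    simp_rw [mixture_sub_one h1s.ne', mul_assoc]
    exact integral_const_mul _ _
  have hrem_nonneg : 0 ≤ ∫ x, klFun ((1 + s * Φ x) / (1 + s)) ∂Q :=
    integral_nonneg fun x => klFun_nonneg (hg_pos x).le
  calc |relEnt (Qs s) P - relEnt Q P - s * K|
      = |∫ x, klFun ((1 + s * Φ x) / (1 + s)) ∂Q - s ^ 2 / (1 + s) * K| := by
        rw [hQs s, hexpand, hfirst]; congr 1; field_simp; ring
    _ ≤ ∫ x, klFun ((1 + s * Φ x) / (1 + s)) ∂Q + s ^ 2 * |K| :=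
        abs_sub_sq_div_mul_le hrem_nonneg hs0
    _ ≤ (Cb ^ 2 + 1 + |K|) * s ^ 2 := by
        linarith [integral_klFun_mixture_le (Q := Q) hs0 hΦpos hΦbdd]

/-- For `Q ≪ P` with finite entropy, `Φ ≥ 0` bounded measurable with `∫ Φ dQ = 1`,
`ψ = Φ − 1` and `Q_s(Φ) = ((1+sΦ)/(1+s))·Q`, one has
`I(Q_s(Φ)|P) = I(Q|P) + s ∫ ψ log(dQ/dP) dQ + O(s²)` as `s → 0⁺`. -/
theorem stmt_3 {E : Type*} [MeasurableSpace E] [TopologicalSpace E] [PolishSpace E]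
    [BorelSpace E]
    (P Q : Measure E) [IsProbabilityMeasure P] [IsProbabilityMeasure Q]
    (hac : Q ≪ P)
    (hent : Integrable (fun x => |Real.log ((Q.rnDeriv P x).toReal)|) Q)
    (Φ : E → ℝ) (hΦmeas : Measurable Φ) (hΦpos : ∀ x, 0 ≤ Φ x)
    (Cb : ℝ) (hΦbdd : ∀ x, Φ x ≤ Cb) (hΦint : ∫ x, Φ x ∂Q = 1)
    (Qs : ℝ → Measure E)
    (hQs : ∀ s, Qs s = Q.withDensity (fun x => ENNReal.ofReal ((1 + s * Φ x) / (1 + s)))) :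
    ∃ C : ℝ, ∀ s ∈ Set.Ioc (0:ℝ) 1,
      |relEnt (Qs s) P - relEnt Q P
        - s * ∫ x, (Φ x - 1) * Real.log ((Q.rnDeriv P x).toReal) ∂Q| ≤ C * s ^ 2 :=
  stmt_3_general P Q hac hent Φ hΦmeas hΦpos Cb hΦbdd hΦint Qs hQs
end

section
/- Let μ ≪ P be probability measures and F_μ(x) = log E_γ[exp(∫₀ᵀ (G_t + m(t)) dW_t(x) − ½ ∫₀ᵀ (G_t + m(t))² dt)], where under the auxiliary measure γ, G is a process independent of x, and W is a P-Brownian motion. Then ∫ F_μ dμ ≤ I(μ|P): applying the entropy inequality with a = 1 and Jensen plus Fubini to compute ∫ exp(F_μ) dP = E_γ[∫ exp(∫(G+m)dW − ½∫(G+m)²dt) dP] = 1. -/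
/-!
Donsker–Varadhan: for any `f`, `∫ f dμ ≤ I(μ|P) + log ∫ exp f dP`, which is Gibbs' inequality
`I(μ|P_f) ≥ 0` for the tilted measure `dP_f ∝ exp f dP`. Applied to `f = F`, the right-hand log
vanishes because, by Fubini and the martingale property, `∫ exp F dP = E_γ[∫ exp Y(·,ω) dP] = 1`.
-/

open MeasureTheory Real InformationTheory

section DonskerVaradhan

variable {α : Type*} {mα : MeasurableSpace α} {μ ν : Measure α} {f : α → ℝ}

theorem integral_le_integral_llr_add_log_integral_exp [IsProbabilityMeasure μ] [SigmaFinite ν]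
    (hμν : μ ≪ ν) (hfμ : Integrable f μ) (hfν : Integrable (fun x ↦ exp (f x)) ν)
    (hllr : Integrable (llr μ ν) μ) :
    ∫ x, f x ∂μ ≤ ∫ x, llr μ ν x ∂μ + log (∫ x, exp (f x) ∂ν) := by
  have gibbs := integral_llr_add_sub_measure_univ_nonneg
    (hμν.trans (absolutelyContinuous_tilted hfν)) (integrable_llr_tilted_right hμν hfμ hllr hfν)
  rw [integral_llr_tilted_right hμν hfμ hfν hllr, probReal_univ (μ := μ)] at gibbs
  linarith [measureReal_le_one (μ := ν.tilted f) (s := Set.univ)]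

end DonskerVaradhan

section Mixture

variable {E Ω : Type*} [MeasurableSpace E] [MeasurableSpace Ω] {P : Measure E} {γ : Measure Ω}
  {Y : E × Ω → ℝ}

theorem integral_integral_exp_eq_one [SigmaFinite P] [IsProbabilityMeasure γ]
    (hY : Integrable (fun p ↦ exp (Y p)) (P.prod γ))
    (hmart : ∀ᵐ ω ∂γ, ∫ x, exp (Y (x, ω)) ∂P = 1) :
    ∫ x, ∫ ω, exp (Y (x, ω)) ∂γ ∂P = 1 := by
  rw [integral_integral_swap hY, integral_congr_ae hmart, integral_const, probReal_univ,
    one_smul]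

theorem exp_log_integral_exp_ae_eq [SigmaFinite P] [IsProbabilityMeasure γ]
    (hY : Integrable (fun p ↦ exp (Y p)) (P.prod γ)) :
    (fun x ↦ exp (log (∫ ω, exp (Y (x, ω)) ∂γ))) =ᵐ[P] fun x ↦ ∫ ω, exp (Y (x, ω)) ∂γ := by
  filter_upwards [hY.prod_right_ae] with x hx
  exact exp_log (integral_exp_pos hx)

end Mixture

theorem stmt_10_general {E Ω' : Type*} [MeasurableSpace E] [MeasurableSpace Ω']
    (P : Measure E) (γ : Measure Ω') [IsProbabilityMeasure P] [IsProbabilityMeasure γ]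
    (μ : Measure E) [IsProbabilityMeasure μ] (hac : μ ≪ P)
    (hent : Integrable (fun x => Real.log ((μ.rnDeriv P x).toReal)) μ)
    (Y : E × Ω' → ℝ)
    (hYint : Integrable (fun p => Real.exp (Y p)) (P.prod γ))
    (hmart : ∀ᵐ ω ∂γ, ∫ x, Real.exp (Y (x, ω)) ∂P = 1)
    (F : E → ℝ) (hF : ∀ x, F x = Real.log (∫ ω, Real.exp (Y (x, ω)) ∂γ))
    (hFint : Integrable F μ) :
    ∫ x, F x ∂μ ≤ ∫ x, Real.log ((μ.rnDeriv P x).toReal) ∂μ := by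
  have hexp : (fun x ↦ exp (F x)) =ᵐ[P] fun x ↦ ∫ ω, exp (Y (x, ω)) ∂γ := by
    simpa only [hF] using exp_log_integral_exp_ae_eq hYint
  have hexp_int : Integrable (fun x ↦ exp (F x)) P :=
    (integrable_congr hexp).2 hYint.integral_prod_left
  have hexp_one : ∫ x, exp (F x) ∂P = 1 := by
    rw [integral_congr_ae hexp, integral_integral_exp_eq_one hYint hmart]
  have key := integral_le_integral_llr_add_log_integral_exp hac hFint hexp_int hent
  rwa [hexp_one, log_one, add_zero] at key

/-- If `F(x) = log E_γ[exp Y(x,·)]` where for `γ`-a.e. `ω` the function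
`x ↦ exp Y(x,ω)` integrates to `1` under `P` (exponential martingale property), then for
any probability measure `μ ≪ P` with finite entropy, `Γ(μ) = ∫ F dμ ≤ I(μ|P)`. -/
theorem stmt_10 {E Ω' : Type*} [MeasurableSpace E] [MeasurableSpace Ω']
    (P : Measure E) (γ : Measure Ω') [IsProbabilityMeasure P] [IsProbabilityMeasure γ]
    [SigmaFinite γ]
    (μ : Measure E) [IsProbabilityMeasure μ] (hac : μ ≪ P)
    (hent : Integrable (fun x => Real.log ((μ.rnDeriv P x).toReal)) μ)
    (Y : E × Ω' → ℝ) (hYmeas : Measurable Y)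
    (hYint : Integrable (fun p => Real.exp (Y p)) (P.prod γ))
    (hmart : ∀ᵐ ω ∂γ, ∫ x, Real.exp (Y (x, ω)) ∂P = 1)
    (F : E → ℝ) (hF : ∀ x, F x = Real.log (∫ ω, Real.exp (Y (x, ω)) ∂γ))
    (hFint : Integrable F μ) :
    ∫ x, F x ∂μ ≤ ∫ x, Real.log ((μ.rnDeriv P x).toReal) ∂μ :=
  stmt_10_general P γ μ hac hent Y hYint hmart F hF hFint
end
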